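/- arXiv:2210.01016 — 4 statements merged into one kernel-verified Lean document; each statement's English description precedes it below -/
import Mathlib

section
/- Let V : ℝ → ℝ be concave on an open interval O containing x₀, and suppose the one-sided derivatives d⁻ = lim_{h→0⁺} (V(x₀) − V(x₀ − h))/h and d⁺ = lim_{h→0⁺} (V(x₀ + h) − V(x₀))/h exist. Let η be a real number with d⁺ < η < d⁻, let m > 0, and define φ(x) = V(x₀) + η·(x − x₀) − m·(x − x₀)². Then V(x) < φ(x) for every x ∈ O with 0 < x₀ − x < (d⁻ − η)/m, and V(x) < φ(x) for every x ∈ O with 0 < x − x₀ < (η − d⁺)/m. -/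
open Filter

/-- Test-function inequalities (A-12)–(A-13): if a concave `V` has a corner at `x₀`
(one-sided derivatives `d⁺ < η < d⁻`), then the parabola
`φ(x) = V(x₀) + η(x−x₀) − m(x−x₀)²` strictly dominates `V` in a punctured
neighborhood of `x₀`. -/
theorem corner_test_function
    (a b x₀ : ℝ) (ha : a < x₀) (hb : x₀ < b)
    (V : ℝ → ℝ) (hV : ConcaveOn ℝ (Set.Ioo a b) V)
    (dm dp : ℝ)
    (hdm : Tendsto (fun h : ℝ => (V x₀ - V (x₀ - h)) / h)
      (nhdsWithin 0 (Set.Ioi 0)) (nhds dm))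
    (hdp : Tendsto (fun h : ℝ => (V (x₀ + h) - V x₀) / h)
      (nhdsWithin 0 (Set.Ioi 0)) (nhds dp))
    (η : ℝ) (hη₁ : dp < η) (hη₂ : η < dm)
    (m : ℝ) (hm : 0 < m)
    (φ : ℝ → ℝ)
    (hφ : ∀ x : ℝ, φ x = V x₀ + η * (x - x₀) - m * (x - x₀) ^ 2) :
    (∀ x ∈ Set.Ioo a b, 0 < x₀ - x → x₀ - x < (dm - η) / m → V x < φ x) ∧
    (∀ x ∈ Set.Ioo a b, 0 < x - x₀ → x - x₀ < (η - dp) / m → V x < φ x) := by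
  have hg : ConvexOn ℝ (Set.Ioo a b) (-V) := hV.neg
  have hx₀ : x₀ ∈ Set.Ioo a b := ⟨ha, hb⟩
  constructor
  · intro x hx hxl hxr
    -- left side: slope (V x₀ - V x)/(x₀ - x) ≥ dm
    have hslope : dm ≤ (V x₀ - V x) / (x₀ - x) := by
      refine le_of_tendsto hdm ?_
      filter_upwards [Ioo_mem_nhdsGT_of_mem (by constructor <;> [rfl; exact hxl] :
        (0:ℝ) ∈ Set.Ico 0 (x₀ - x))] with h hh
      obtain ⟨h0, hlt⟩ := hh
      have hxh : x₀ - h ∈ Set.Ioo a b := ⟨by linarith [hx.1], by linarith⟩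
      have := hg.secant_mono (a := x₀) (x := x) (y := x₀ - h) hx₀ hx hxh
        (by linarith) (by linarith) (by linarith)
      simp only [Pi.neg_apply] at this
      have hne1 : x - x₀ ≠ 0 := by linarith
      have hne2 : x₀ - x ≠ 0 := by linarith
      have hne3 : h ≠ 0 := ne_of_gt h0
      have e1 : (-V x - -V x₀) / (x - x₀) = -((V x₀ - V x) / (x₀ - x)) := by
        field_simp; ring
      have e2 : (-V (x₀ - h) - -V x₀) / (x₀ - h - x₀) = -((V x₀ - V (x₀ - h)) / h) := by
        rw [show x₀ - h - x₀ = -h by ring, div_neg]; field_simp; ring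
      rw [e1, e2] at this
      linarith
    have hVx : V x ≤ V x₀ - dm * (x₀ - x) := by
      have := (le_div_iff₀ hxl).mp hslope
      linarith
    have hmt : (x₀ - x) * m < dm - η := (lt_div_iff₀ hm).mp hxr
    rw [hφ x]
    nlinarith [hxl, sq_nonneg (x - x₀)]
  · intro x hx hxl hxr
    have hslope : (V x - V x₀) / (x - x₀) ≤ dp := by
      refine ge_of_tendsto hdp ?_
      filter_upwards [Ioo_mem_nhdsGT_of_mem (by constructor <;> [rfl; exact hxl] :
        (0:ℝ) ∈ Set.Ico 0 (x - x₀))] with h hh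
      obtain ⟨h0, hlt⟩ := hh
      have hxh : x₀ + h ∈ Set.Ioo a b := ⟨by linarith, by linarith [hx.2]⟩
      have := hg.secant_mono (a := x₀) (x := x₀ + h) (y := x) hx₀ hxh hx
        (by linarith) (by linarith) (by linarith)
      simp only [Pi.neg_apply] at this
      have hne1 : x - x₀ ≠ 0 := by linarith
      have hne3 : h ≠ 0 := ne_of_gt h0
      have e1 : (-V (x₀ + h) - -V x₀) / (x₀ + h - x₀) = -((V (x₀ + h) - V x₀) / h) := by
        rw [show x₀ + h - x₀ = h by ring]; field_simp; ring
      have e2 : (-V x - -V x₀) / (x - x₀) = -((V x - V x₀) / (x - x₀)) := by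
        field_simp; ring
      rw [e1, e2] at this
      linarith
    have hVx : V x ≤ V x₀ + dp * (x - x₀) := by
      have := (div_le_iff₀ hxl).mp hslope
      linarith
    have hmt : (x - x₀) * m < η - dp := (lt_div_iff₀ hm).mp hxr
    rw [hφ x]
    nlinarith [hxl]
end

section
/- Let F : ℝ → ℝ → ℝ → ℝ → ℝ be such that for every x > 0 and every v, q ∈ ℝ there exists X ∈ ℝ with F(x, v, q, X) > 0 (for instance, F continuous, degenerate elliptic with F(x,v,q,·) unbounded above). Let V : ℝ → ℝ be concave on (0,∞) and a viscosity subsolution of F(x, u, u', u'') = 0 on (0,∞), meaning: for every x₀ > 0 and every twice continuously differentiable ψ : ℝ → ℝ with ψ(x₀) = V(x₀) and V(x) ≤ ψ(x) for all x in some neighborhood of x₀ contained in (0,∞), one has F(x₀, V(x₀), ψ'(x₀), ψ''(x₀)) ≤ 0. Then V is differentiable at every point of (0,∞); equivalently, the left and right derivatives of V agree at every x₀ > 0. -/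
open Set Filter Topology

/-! At a corner of a concave function `V`, i.e. where its left derivative `a` exceeds its right
derivative `b`, the function lies below the wedge `V x₀ + m (x - x₀) - δ |x - x₀|` with
`m = (a + b) / 2` and `δ = (a - b) / 2 > 0`. Near `x₀` the wedge lies below every parabola
`V x₀ + m (x - x₀) + α (x - x₀)²`, whatever the sign of `α`, so the subsolution property gives
`F(x₀, V x₀, m, 2α) ≤ 0` for every `α`, contradicting the positivity assumption on `F`. -/

def quadraticAt (x₀ c₀ c₁ c₂ : ℝ) (x : ℝ) : ℝ := c₀ + c₁ * (x - x₀) + c₂ * (x - x₀) ^ 2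

section quadraticAt

variable (x₀ c₀ c₁ c₂ : ℝ)

@[simp]
lemma quadraticAt_self : quadraticAt x₀ c₀ c₁ c₂ x₀ = c₀ := by
  simp [quadraticAt]

lemma contDiff_quadraticAt : ContDiff ℝ 2 (quadraticAt x₀ c₀ c₁ c₂) := by
  unfold quadraticAt
  fun_prop

lemma deriv_quadraticAt :
    deriv (quadraticAt x₀ c₀ c₁ c₂) = fun x ↦ c₁ + 2 * c₂ * (x - x₀) := by
  ext x
  have h := ((hasDerivAt_id x).sub_const x₀).fun_pow 2
  simp only [id, Nat.cast_ofNat, mul_one] at h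
  exact (((((hasDerivAt_id x).sub_const x₀).const_mul c₁).const_add c₀).add
    (h.const_mul c₂)).deriv.trans (by ring)

lemma deriv_quadraticAt_self : deriv (quadraticAt x₀ c₀ c₁ c₂) x₀ = c₁ := by
  simp [deriv_quadraticAt]

lemma deriv_deriv_quadraticAt_self : deriv (deriv (quadraticAt x₀ c₀ c₁ c₂)) x₀ = 2 * c₂ := by
  simp [deriv_quadraticAt]

end quadraticAt

lemma eventually_mul_sq_le_mul_abs (x₀ c : ℝ) {δ : ℝ} (hδ : 0 < δ) :
    ∀ᶠ x in 𝓝 x₀, c * (x - x₀) ^ 2 ≤ δ * |x - x₀| := by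
  have hlim : Tendsto (fun x ↦ |c| * |x - x₀|) (𝓝 x₀) (𝓝 0) := by
    simpa using ((continuous_sub_right x₀).abs.const_mul |c|).tendsto x₀
  filter_upwards [hlim.eventually (gt_mem_nhds hδ)] with x hx
  calc c * (x - x₀) ^ 2 ≤ |c| * |x - x₀| * |x - x₀| := by
        rw [mul_assoc, abs_mul_abs_self, ← sq]
        exact mul_le_mul_of_nonneg_right (le_abs_self c) (sq_nonneg _)
    _ ≤ δ * |x - x₀| := mul_le_mul_of_nonneg_right hx.le (abs_nonneg _)

namespace ConvexOn

variable {S : Set ℝ} {f : ℝ → ℝ} {x : ℝ}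

lemma differentiableAt_of_leftDeriv_eq_rightDeriv (hf : ConvexOn ℝ S f) (hx : x ∈ interior S)
    (h : derivWithin f (Iio x) x = derivWithin f (Ioi x) x) : DifferentiableAt ℝ f x := by
  have hleft := (hasDerivWithinAt_iff_tendsto_slope' self_notMem_Iio).1
    (hf.hasDerivWithinAt_leftDeriv_of_mem_interior hx)
  have hright := (hasDerivWithinAt_iff_tendsto_slope' self_notMem_Ioi).1
    (hf.hasDerivWithinAt_rightDeriv_of_mem_interior hx)
  rw [h] at hleft
  exact (hasDerivAt_iff_tendsto_slope_left_right.2 ⟨hleft, hright⟩).differentiableAt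

lemma add_max_mul_le (hf : ConvexOn ℝ S f) (hx : x ∈ interior S) {y : ℝ} (hy : y ∈ S) :
    f x + max (derivWithin f (Iio x) x * (y - x)) (derivWithin f (Ioi x) x * (y - x)) ≤ f y := by
  have hab := hf.leftDeriv_le_rightDeriv_of_mem_interior hx
  rcases lt_trichotomy y x with hyx | rfl | hxy
  · have hslope := hf.slope_le_leftDeriv_of_mem_interior hy hx hyx
    rw [slope_def_field, div_le_iff₀ (sub_pos.2 hyx)] at hslope
    rw [max_eq_left (mul_le_mul_of_nonpos_right hab (sub_nonpos.2 hyx.le))]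
    linarith
  · simp
  · have hslope := hf.rightDeriv_le_slope_of_mem_interior hx hy hxy
    rw [slope_def_field, le_div_iff₀ (sub_pos.2 hxy)] at hslope
    rw [max_eq_right (mul_le_mul_of_nonneg_right hab (sub_nonneg.2 hxy.le))]
    linarith

lemma exists_eventually_quadraticAt_le (hf : ConvexOn ℝ S f) (hx : x ∈ interior S)
    (hnd : ¬DifferentiableAt ℝ f x) :
    ∃ η, ∀ c, ∀ᶠ y in 𝓝 x, quadraticAt x (f x) η c y ≤ f y := by
  set a := derivWithin f (Iio x) x
  set b := derivWithin f (Ioi x) x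
  have hab : a < b := (hf.leftDeriv_le_rightDeriv_of_mem_interior hx).lt_of_ne
    fun h ↦ hnd (hf.differentiableAt_of_leftDeriv_eq_rightDeriv hx h)
  refine ⟨(a + b) / 2, fun c ↦ ?_⟩
  filter_upwards [eventually_mul_sq_le_mul_abs x c (half_pos (sub_pos.2 hab)),
    mem_interior_iff_mem_nhds.1 hx] with y hquad hy
  have hwedge : f x + max (a * (y - x)) (b * (y - x)) ≤ f y := hf.add_max_mul_le hx hy
  have hmax : (a + b) / 2 * (y - x) + (b - a) / 2 * |y - x| ≤ max (a * (y - x)) (b * (y - x)) := by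
    rcases le_total 0 (y - x) with h | h
    · rw [abs_of_nonneg h]
      linarith [le_max_right (a * (y - x)) (b * (y - x))]
    · rw [abs_of_nonpos h]
      linarith [le_max_left (a * (y - x)) (b * (y - x))]
  simp only [quadraticAt]
  linarith

end ConvexOn

lemma ConcaveOn.exists_eventually_le_quadraticAt {S : Set ℝ} {f : ℝ → ℝ} {x : ℝ}
    (hf : ConcaveOn ℝ S f) (hx : x ∈ interior S) (hnd : ¬DifferentiableAt ℝ f x) :
    ∃ η, ∀ c, ∀ᶠ y in 𝓝 x, f y ≤ quadraticAt x (f x) η c y := by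
  obtain ⟨η, hη⟩ := hf.neg.exists_eventually_quadraticAt_le hx fun h ↦ hnd (by simpa using h.neg)
  refine ⟨-η, fun c ↦ (hη (-c)).mono fun y hy ↦ ?_⟩
  simp only [quadraticAt, Pi.neg_apply] at hy ⊢
  linarith

/-- Smooth-fit Lemma A-3: a concave viscosity subsolution of
`F(x, u, u', u'') = 0` on `(0,∞)`, where `F(x,v,q,·)` takes a positive value for
every `x > 0` and `v, q ∈ ℝ`, is differentiable at every point of `(0,∞)`. -/
theorem viscosity_subsolution_differentiable
    (F : ℝ → ℝ → ℝ → ℝ → ℝ)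
    (hF : ∀ x > (0 : ℝ), ∀ v q : ℝ, ∃ X : ℝ, 0 < F x v q X)
    (V : ℝ → ℝ)
    (hV : ConcaveOn ℝ (Set.Ioi 0) V)
    (hsub : ∀ x₀ > (0 : ℝ), ∀ ψ : ℝ → ℝ, ContDiff ℝ 2 ψ → ψ x₀ = V x₀ →
      (∃ ε > (0 : ℝ), Metric.ball x₀ ε ⊆ Set.Ioi 0 ∧
        ∀ x ∈ Metric.ball x₀ ε, V x ≤ ψ x) →
      F x₀ (V x₀) (deriv ψ x₀) (deriv (deriv ψ) x₀) ≤ 0) :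
    ∀ x₀ > (0 : ℝ), DifferentiableAt ℝ V x₀ := by
  intro x₀ hx₀
  by_contra hnd
  obtain ⟨η, hη⟩ := hV.exists_eventually_le_quadraticAt (by rwa [interior_Ioi]) hnd
  obtain ⟨X, hX⟩ := hF x₀ hx₀ (V x₀) η
  obtain ⟨ε, hε, hball⟩ :=
    Metric.eventually_nhds_iff_ball.1 ((hη (X / 2)).and (Ioi_mem_nhds hx₀))
  have hle := hsub x₀ hx₀ _ (contDiff_quadraticAt x₀ (V x₀) η (X / 2)) (quadraticAt_self ..)
    ⟨ε, hε, fun y hy ↦ (hball y hy).2, fun y hy ↦ (hball y hy).1⟩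
  rw [deriv_quadraticAt_self, deriv_deriv_quadraticAt_self, mul_div_cancel₀ X two_ne_zero] at hle
  exact hle.not_gt hX
end

section
/- Let a < b be real numbers and let V : ℝ → ℝ be twice continuously differentiable on (a,b) with V''(x) < 0 for all x ∈ (a,b). Let J be an open interval contained in the image of (a,b) under V', let I : ℝ → ℝ satisfy I(y) ∈ (a,b) and V'(I(y)) = y for all y ∈ J, and define v(y) = V(I(y)) − y·I(y). Let δ, r, θ ∈ ℝ and p : ℝ → ℝ → ℝ, and suppose that for all x ∈ (a,b): δ·V(x) = −θ·(V'(x))²/V''(x) + p(x, V'(x)) + r·x·V'(x). Then for all y ∈ J: δ·(v(y) − y·v'(y)) = θ·y²·v''(y) + p(−v'(y), y) − r·y·v'(y). -/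
/-!
The dual variable is `y = V'(x)`. Since `V'' < 0`, `V'` is strictly decreasing, so its right
inverse `I` is continuous and, by the inverse function rule, differentiable with `I' = 1 / V''(I)`.
The envelope identity `v' = V'(I) I' - I - y I' = -I` then gives `v'' = -1 / V''(I)`, and
substituting `x = I(y)`, `V'(x) = y`, `V''(x) = -1 / v''(y)`, `x = -v'(y)` into the HJB equation at
`x = I(y)` yields the dual equation.
-/

open Set Filter Topology

namespace Set.RightInvOn

section

variable {α β : Type*} {s : Set α} {t : Set β} {f : α → β} {g : β → α}

theorem strictAntiOn [LinearOrder α] [LinearOrder β] (hgf : RightInvOn g f t)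
    (hgs : MapsTo g t s) (hf : StrictAntiOn f s) : StrictAntiOn g t := by
  intro y₁ hy₁ y₂ hy₂ hlt
  by_contra! hle
  have := hf.antitoneOn (hgs hy₁) (hgs hy₂) hle
  rw [hgf.eq hy₁, hgf.eq hy₂] at this
  exact hlt.not_ge this

theorem image_eq (hgf : RightInvOn g f t) (hgs : MapsTo g t s) (hf : InjOn f s) :
    g '' t = s ∩ f ⁻¹' t := by
  ext x
  constructor
  · rintro ⟨y, hy, rfl⟩
    exact ⟨hgs hy, by rwa [mem_preimage, hgf.eq hy]⟩
  · rintro ⟨hx, hfx⟩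
    exact ⟨f x, hfx, hf (hgs hfx) hx (hgf.eq hfx)⟩

end

variable {s t : Set ℝ} {f f' g : ℝ → ℝ}

theorem continuousAt_of_strictAntiOn (hgf : RightInvOn g f t) (hgs : MapsTo g t s)
    (hs : IsOpen s) (ht : IsOpen t) (hf : ContinuousOn f s) (hanti : StrictAntiOn f s)
    {y : ℝ} (hy : y ∈ t) : ContinuousAt g y := by
  have himage : IsOpen (g '' t) := by
    rw [hgf.image_eq hgs hanti.injOn]
    exact hf.isOpen_inter_preimage hs ht
  have hmono : StrictMonoOn (fun z => -g z) t := fun _ h₁ _ h₂ hlt =>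
    neg_lt_neg (hgf.strictAntiOn hgs hanti h₁ h₂ hlt)
  have hneg_image : (fun z => -g z) '' t ∈ 𝓝 (-g y) := by
    rw [← image_image (fun x : ℝ => -x)]
    exact ((Homeomorph.neg ℝ).isOpenMap _ himage).mem_nhds ⟨g y, mem_image_of_mem g hy, rfl⟩
  convert (hmono.continuousAt_of_image_mem_nhds (ht.mem_nhds hy) hneg_image).neg using 1
  ext z
  simp only [Pi.neg_apply, neg_neg]

theorem hasDerivAt_of_hasDerivAt_neg (hgf : RightInvOn g f t) (hgs : MapsTo g t s)
    (hs : IsOpen s) (hs' : Convex ℝ s) (ht : IsOpen t)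
    (hf : ∀ x ∈ s, HasDerivAt f (f' x) x) (hf' : ∀ x ∈ s, f' x < 0) {y : ℝ} (hy : y ∈ t) :
    HasDerivAt g (f' (g y))⁻¹ y := by
  have hcont : ContinuousOn f s := fun x hx => (hf x hx).continuousAt.continuousWithinAt
  have hanti : StrictAntiOn f s := strictAntiOn_of_hasDerivWithinAt_neg hs' hcont
    (fun x hx => (hf x (interior_subset hx)).hasDerivWithinAt)
    (fun x hx => hf' x (interior_subset hx))
  exact (hf _ (hgs hy)).of_local_left_inverse
    (hgf.continuousAt_of_strictAntiOn hgs hs ht hcont hanti hy) (hf' _ (hgs hy)).ne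
    (eventually_of_mem (ht.mem_nhds hy) fun z hz => hgf.eq hz)

end Set.RightInvOn

theorem hasDerivAt_legendre_dual {V I : ℝ → ℝ} {I' y : ℝ} (hV : HasDerivAt V y (I y))
    (hI : HasDerivAt I I' y) : HasDerivAt (fun z => V (I z) - z * I z) (-I y) y := by
  refine ((hV.comp y hI).sub ((hasDerivAt_id' y).mul hI)).congr_deriv ?_
  ring

theorem dual_transform_ode_general
    (a b : ℝ)
    (V V' V'' : ℝ → ℝ)
    (hd1 : ∀ x ∈ Set.Ioo a b, HasDerivAt V (V' x) x)
    (hd2 : ∀ x ∈ Set.Ioo a b, HasDerivAt V' (V'' x) x)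
    (hneg : ∀ x ∈ Set.Ioo a b, V'' x < 0)
    (c d : ℝ)
    (I : ℝ → ℝ)
    (hI : ∀ y ∈ Set.Ioo c d, I y ∈ Set.Ioo a b ∧ V' (I y) = y)
    (v : ℝ → ℝ)
    (hv : ∀ y : ℝ, v y = V (I y) - y * I y)
    (δ r θ : ℝ) (p : ℝ → ℝ → ℝ)
    (hODE : ∀ x ∈ Set.Ioo a b,
      δ * V x = -θ * (V' x) ^ 2 / V'' x + p x (V' x) + r * x * V' x) :
    ∀ y ∈ Set.Ioo c d,
      δ * (v y - y * deriv v y) =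
        θ * y ^ 2 * deriv (deriv v) y + p (-(deriv v y)) y - r * y * deriv v y := by
  have hmaps : MapsTo I (Ioo c d) (Ioo a b) := fun y hy => (hI y hy).1
  have hinv : RightInvOn I V' (Ioo c d) := fun y hy => (hI y hy).2
  have hdI : ∀ y ∈ Ioo c d, HasDerivAt I (V'' (I y))⁻¹ y := fun y hy =>
    hinv.hasDerivAt_of_hasDerivAt_neg hmaps isOpen_Ioo (convex_Ioo a b) isOpen_Ioo hd2 hneg hy
  have hdv : ∀ y ∈ Ioo c d, deriv v y = -I y := fun y hy => by
    rw [funext hv]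
    exact (hasDerivAt_legendre_dual (by simpa only [hinv.eq hy] using hd1 _ (hmaps hy))
      (hdI y hy)).deriv
  intro y hy
  have hdv2 : deriv (deriv v) y = -(V'' (I y))⁻¹ := by
    have hdv_nhds : deriv v =ᶠ[𝓝 y] fun z => -I z :=
      eventually_of_mem (isOpen_Ioo.mem_nhds hy) hdv
    rw [hdv_nhds.deriv_eq]
    exact (hdI y hy).neg.deriv
  have hx := hODE (I y) (hmaps hy)
  rw [hinv.eq hy] at hx
  rw [div_eq_mul_inv] at hx
  rw [hdv y hy, hdv2, hv y, neg_neg]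
  linear_combination hx

/-- Transformation (A-33): the unconstrained-region HJB equation
`δV = −θ(V')²/V'' + p(x,V') + rxV'` becomes, under the dual transformation
`v(y) = V(I(y)) − y·I(y)`, the quasilinear ODE
`δ(v − y v') = θ y² v'' + p(−v', y) − r y v'`. -/
theorem dual_transform_ode
    (a b : ℝ) (hab : a < b)
    (V V' V'' : ℝ → ℝ)
    (hd1 : ∀ x ∈ Set.Ioo a b, HasDerivAt V (V' x) x)
    (hd2 : ∀ x ∈ Set.Ioo a b, HasDerivAt V' (V'' x) x)
    (hd2c : ContinuousOn V'' (Set.Ioo a b))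
    (hneg : ∀ x ∈ Set.Ioo a b, V'' x < 0)
    (c d : ℝ)
    (hJ : Set.Ioo c d ⊆ V' '' Set.Ioo a b)
    (I : ℝ → ℝ)
    (hI : ∀ y ∈ Set.Ioo c d, I y ∈ Set.Ioo a b ∧ V' (I y) = y)
    (v : ℝ → ℝ)
    (hv : ∀ y : ℝ, v y = V (I y) - y * I y)
    (δ r θ : ℝ) (p : ℝ → ℝ → ℝ)
    (hODE : ∀ x ∈ Set.Ioo a b,
      δ * V x = -θ * (V' x) ^ 2 / V'' x + p x (V' x) + r * x * V' x) :
    ∀ y ∈ Set.Ioo c d,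
      δ * (v y - y * deriv v y) =
        θ * y ^ 2 * deriv (deriv v) y + p (-(deriv v y)) y - r * y * deriv v y :=
  dual_transform_ode_general a b V V' V'' hd1 hd2 hneg c d I hI v hv δ r θ p hODE
end

section
/- Let δ ∈ ℝ, 0 < r < μ, σ > 0, G > 0, set θ = (μ−r)²/(2σ²), and let p : ℝ → ℝ → ℝ be continuous. Let x₁ < x* < x₂ and let V : ℝ → ℝ be continuous on (x₁,x₂), twice continuously differentiable on (x₁,x*) and on (x*,x₂), and differentiable at x* with d := V'(x*) and with V'(x) → d as x → x* from both sides. Suppose V''(x) < 0 for x ∈ (x₁,x*), V'' has a left limit A⁻ := lim_{x↑x*} V''(x) < 0 and a right limit A⁺ := lim_{x↓x*} V''(x), and: (i) δ·V(x) = −θ·(V'(x))²/V''(x) + p(x, V'(x)) + r·x·V'(x) for all x ∈ (x₁,x*); (ii) δ·V(x) = (μ−r)·G·V'(x) + (1/2)·σ²·G²·V''(x) + p(x, V'(x)) + r·x·V'(x) for all x ∈ (x*,x₂); and (iii) −(μ−r)·d/(σ²·A⁻) = G. Then A⁺ = A⁻. -/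
/-!
Let `x → x*` in both Hamilton–Jacobi–Bellman equations. Since `V`, `V'` and `p` are continuous
at the junction, every term except the one carrying `V''` has the same limit on both sides, so
`−θ d² / A⁻ = (μ − r) G d + ½ σ² G² A⁺`. The first-order condition reads `(μ − r) d = −G σ² A⁻`,
which turns the left side into `−½ σ² G² A⁻` and the right side into `−σ² G² A⁻ + ½ σ² G² A⁺`.
-/

open Filter Set Topology

theorem eq_of_eventually_eq_of_tendsto {X Q A F : Type*} [TopologicalSpace X]
    [TopologicalSpace Q] [TopologicalSpace A] [TopologicalSpace F] [T2Space F]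
    {l : Filter X} [l.NeBot] {x₀ : X} {q₀ : Q} {a₀ : A} {f₀ : F}
    {f : X → F} {q : X → Q} {a : X → A} {H : X × Q × A → F}
    (hl : l ≤ 𝓝 x₀) (hf : Tendsto f l (𝓝 f₀)) (hq : Tendsto q l (𝓝 q₀))
    (ha : Tendsto a l (𝓝 a₀)) (hH : ContinuousAt H (x₀, q₀, a₀))
    (heq : ∀ᶠ x in l, f x = H (x, q x, a x)) :
    f₀ = H (x₀, q₀, a₀) :=
  tendsto_nhds_unique_of_eventuallyEq hf
    (hH.tendsto.comp ((tendsto_id'.2 hl).prodMk_nhds (hq.prodMk_nhds ha))) heq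

theorem eq_of_first_order_condition {θ μ r σ G q a b : ℝ} (hσ : σ ≠ 0) (hG : G ≠ 0)
    (ha : a ≠ 0) (hθ : θ = (μ - r) ^ 2 / (2 * σ ^ 2))
    (hfoc : -((μ - r) * q) / (σ ^ 2 * a) = G)
    (h : -θ * q ^ 2 / a = (μ - r) * G * q + 1 / 2 * σ ^ 2 * G ^ 2 * b) :
    b = a := by
  have hfoc' : (μ - r) * q = -(G * σ ^ 2 * a) := by
    field_simp at hfoc
    linarith
  subst hθ
  field_simp at h
  have hba : σ ^ 4 * G ^ 2 * a * (b - a) = 0 := by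
    linear_combination -h - ((μ - r) * q + G * σ ^ 2 * a) * hfoc'
  exact sub_eq_zero.mp ((mul_eq_zero.mp hba).resolve_left (by positivity))

theorem junction_second_derivative_match_general
    (δ r μ σ G : ℝ) (hσ : 0 < σ) (hG : 0 < G)
    (θ : ℝ) (hθ : θ = (μ - r) ^ 2 / (2 * σ ^ 2))
    (p : ℝ → ℝ → ℝ) (hp : Continuous (Function.uncurry p))
    (x₁ xs x₂ : ℝ) (h₁ : x₁ < xs) (h₂ : xs < x₂)
    (V : ℝ → ℝ)
    (hVcont : ContinuousOn V (Ioo x₁ x₂))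
    (d : ℝ)
    (hdl : Tendsto (deriv V) (nhdsWithin xs (Iio xs)) (nhds d))
    (hdr : Tendsto (deriv V) (nhdsWithin xs (Ioi xs)) (nhds d))
    (Am Ap : ℝ)
    (hAm : Tendsto (deriv (deriv V)) (nhdsWithin xs (Ioo x₁ xs)) (nhds Am))
    (hAmneg : Am < 0)
    (hAp : Tendsto (deriv (deriv V)) (nhdsWithin xs (Ioo xs x₂)) (nhds Ap))
    (hODEl : ∀ x ∈ Ioo x₁ xs,
      δ * V x = -θ * (deriv V x) ^ 2 / deriv (deriv V) x
        + p x (deriv V x) + r * x * deriv V x)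
    (hODEr : ∀ x ∈ Ioo xs x₂,
      δ * V x = (μ - r) * G * deriv V x
        + (1 / 2) * σ ^ 2 * G ^ 2 * deriv (deriv V) x
        + p x (deriv V x) + r * x * deriv V x)
    (hfoc : -((μ - r) * d) / (σ ^ 2 * Am) = G) :
    Ap = Am := by
  have hV : Tendsto (fun x => δ * V x) (𝓝 xs) (𝓝 (δ * V xs)) :=
    ((hVcont.continuousAt (Ioo_mem_nhds h₁ h₂)).const_mul δ).tendsto
  rw [nhdsWithin_Ioo_eq_nhdsLT h₁] at hAm
  rw [nhdsWithin_Ioo_eq_nhdsGT h₂] at hAp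
  have hleft : δ * V xs = -θ * d ^ 2 / Am + p xs d + r * xs * d :=
    eq_of_eventually_eq_of_tendsto (l := 𝓝[<] xs)
      (H := fun y : ℝ × ℝ × ℝ => -θ * y.2.1 ^ 2 / y.2.2 + p y.1 y.2.1 + r * y.1 * y.2.1)
      nhdsWithin_le_nhds (hV.mono_left nhdsWithin_le_nhds) hdl hAm
      (by fun_prop (disch := exact hAmneg.ne)) (eventually_of_mem (Ioo_mem_nhdsLT h₁) hODEl)
  have hright :
      δ * V xs = (μ - r) * G * d + (1 / 2) * σ ^ 2 * G ^ 2 * Ap + p xs d + r * xs * d :=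
    eq_of_eventually_eq_of_tendsto (l := 𝓝[>] xs)
      (H := fun y : ℝ × ℝ × ℝ => (μ - r) * G * y.2.1 + (1 / 2) * σ ^ 2 * G ^ 2 * y.2.2
        + p y.1 y.2.1 + r * y.1 * y.2.1)
      nhdsWithin_le_nhds (hV.mono_left nhdsWithin_le_nhds) hdr hAp
      (by fun_prop) (eventually_of_mem (Ioo_mem_nhdsGT h₂) hODEr)
  exact eq_of_first_order_condition hσ.ne' hG.ne' hAmneg.ne hθ hfoc (by linarith)

/-- Step 5 of the proof of Theorem 3.1: at a junction point `x*` between the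
unconstrained region and the constrained region (constraint level `G`), continuity of
`V` and `V'` together with the first-order condition `−(μ−r)V'(x*−)/(σ²V''(x*−)) = G`
force the one-sided limits of `V''` to agree: `A⁺ = A⁻`. -/
theorem junction_second_derivative_match
    (δ r μ σ G : ℝ) (hr : 0 < r) (hrμ : r < μ) (hσ : 0 < σ) (hG : 0 < G)
    (θ : ℝ) (hθ : θ = (μ - r) ^ 2 / (2 * σ ^ 2))
    (p : ℝ → ℝ → ℝ) (hp : Continuous (Function.uncurry p))
    (x₁ xs x₂ : ℝ) (h₁ : x₁ < xs) (h₂ : xs < x₂)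
    (V : ℝ → ℝ)
    (hVcont : ContinuousOn V (Ioo x₁ x₂))
    (hC2l : ∀ x ∈ Ioo x₁ xs, DifferentiableAt ℝ V x ∧ DifferentiableAt ℝ (deriv V) x)
    (hC2lc : ContinuousOn (deriv (deriv V)) (Ioo x₁ xs))
    (hC2r : ∀ x ∈ Ioo xs x₂, DifferentiableAt ℝ V x ∧ DifferentiableAt ℝ (deriv V) x)
    (hC2rc : ContinuousOn (deriv (deriv V)) (Ioo xs x₂))
    (hVd : DifferentiableAt ℝ V xs)
    (d : ℝ) (hd : d = deriv V xs)
    (hdl : Tendsto (deriv V) (nhdsWithin xs (Iio xs)) (nhds d))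
    (hdr : Tendsto (deriv V) (nhdsWithin xs (Ioi xs)) (nhds d))
    (hV''neg : ∀ x ∈ Ioo x₁ xs, deriv (deriv V) x < 0)
    (Am Ap : ℝ)
    (hAm : Tendsto (deriv (deriv V)) (nhdsWithin xs (Ioo x₁ xs)) (nhds Am))
    (hAmneg : Am < 0)
    (hAp : Tendsto (deriv (deriv V)) (nhdsWithin xs (Ioo xs x₂)) (nhds Ap))
    (hODEl : ∀ x ∈ Ioo x₁ xs,
      δ * V x = -θ * (deriv V x) ^ 2 / deriv (deriv V) x
        + p x (deriv V x) + r * x * deriv V x)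
    (hODEr : ∀ x ∈ Ioo xs x₂,
      δ * V x = (μ - r) * G * deriv V x
        + (1 / 2) * σ ^ 2 * G ^ 2 * deriv (deriv V) x
        + p x (deriv V x) + r * x * deriv V x)
    (hfoc : -((μ - r) * d) / (σ ^ 2 * Am) = G) :
    Ap = Am :=
  junction_second_derivative_match_general δ r μ σ G hσ hG θ hθ p hp x₁ xs x₂ h₁ h₂ V hVcont d hdl
    hdr Am Ap hAm hAmneg hAp hODEl hODEr hfoc
end
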